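/- arXiv:1201.1783 — 3 statements merged into one kernel-verified Lean document; each statement's English description precedes it below -/
import Mathlib

section
/- Let R be monotone in the set-valued sense: for all X, Y in L^∞_d, if X(ω) − Y(ω) ∈ K^d for P-almost every ω, then R(Y) ⊆ R(X) + K^n. Then the scalarization ρ_l is monotone: for all X, Y in L^∞_d with X(ω) − Y(ω) ∈ K^d for P-almost every ω, one has ρ_l(Y) − ρ_l(X) ∈ K^n (indeed each component of ρ_l(Y) is greater than or equal to the corresponding component of ρ_l(X)). -/
open MeasureTheory Pointwise

lemma apply_nonneg_of_mem_ray {ι : Type*} {v : ι → ℝ} {j : ι} (hv : 0 ≤ v j) {y : ι → ℝ}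
    (hy : y ∈ {y | ∃ t : ℝ, 0 ≤ t ∧ y = t • v}) : 0 ≤ y j := by
  obtain ⟨t, ht, rfl⟩ := hy
  exact mul_nonneg ht hv

-- Nonnegativity on `l` keeps the larger set bounded below, where `sInf` is not the junk value `0`.
lemma sInf_image_apply_inter_anti {ι : Type*} {S T l : Set (ι → ℝ)} (j : ι)
    (hl : ∀ y ∈ l, 0 ≤ y j) (hST : S ⊆ T) (hS : (S ∩ l).Nonempty) :
    sInf ((fun y => y j) '' (T ∩ l)) ≤ sInf ((fun y => y j) '' (S ∩ l)) := by
  refine csInf_le_csInf ⟨0, ?_⟩ (hS.image _) (Set.image_mono (Set.inter_subset_inter_left _ hST))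
  rintro _ ⟨y, ⟨-, hy⟩, rfl⟩
  exact hl y hy

theorem setValuedRiskMeasure_scalarization_monotone_general
    {Ω : Type*} [MeasurableSpace Ω] (P : Measure Ω)
    {d n : ℕ}
    (Kd : Set (Fin d → ℝ)) (Kn : Set (Fin n → ℝ))
    (hKn_orth : ∀ y : Fin n → ℝ, (∀ j, 0 ≤ y j) → y ∈ Kn)
    (v : Fin n → ℝ) (hv : ∀ j, 0 < v j)
    (l : Set (Fin n → ℝ)) (hl : l = {y | ∃ t : ℝ, 0 ≤ t ∧ y = t • v})
    (R : Lp (Fin d → ℝ) ⊤ P → Set (Fin n → ℝ))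
    (hR_add : ∀ Z, R Z + Kn = R Z)
    (hR_ray : ∀ Z, (R Z ∩ l).Nonempty)
    (ρ : Lp (Fin d → ℝ) ⊤ P → (Fin n → ℝ))
    (hρ : ∀ Z j, ρ Z j = sInf ((fun y => y j) '' (R Z ∩ l)))
    -- monotonicity of `R` in the set-valued sense
    (hmono : ∀ X Y : Lp (Fin d → ℝ) ⊤ P,
      (∀ᵐ ω ∂P, X ω - Y ω ∈ Kd) → R Y ⊆ R X + Kn) :
    ∀ X Y : Lp (Fin d → ℝ) ⊤ P,
      (∀ᵐ ω ∂P, X ω - Y ω ∈ Kd) →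
      ρ Y - ρ X ∈ Kn ∧ ∀ j, ρ X j ≤ ρ Y j := by
  intro X Y hXY
  have hsub : R Y ⊆ R X := hR_add X ▸ hmono X Y hXY
  have hle : ∀ j, ρ X j ≤ ρ Y j := fun j => by
    rw [hρ X j, hρ Y j]
    refine sInf_image_apply_inter_anti j (fun y hy => ?_) hsub (hR_ray Y)
    exact apply_nonneg_of_mem_ray (hv j).le (hl ▸ hy)
  exact ⟨hKn_orth _ fun j => sub_nonneg.mpr (hle j), hle⟩

/-- If the set-valued risk measure `R` is monotone (in the set-valued
sense), then its scalarization `ρ_l` along the ray `l` through a strictly positive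
vector `v` is monotone: `ρ_l Y - ρ_l X ∈ K^n`, and indeed componentwise
`ρ_l X j ≤ ρ_l Y j`. -/
theorem setValuedRiskMeasure_scalarization_monotone
    {Ω : Type*} [MeasurableSpace Ω] (P : Measure Ω) [IsProbabilityMeasure P]
    {d n : ℕ}
    (Kd : Set (Fin d → ℝ)) (Kn : Set (Fin n → ℝ))
    (hKd_closed : IsClosed Kd) (hKd_convex : Convex ℝ Kd)
    (hKd_cone : ∀ x ∈ Kd, ∀ t : ℝ, 0 ≤ t → t • x ∈ Kd)
    (hKd_orth : ∀ x : Fin d → ℝ, (∀ i, 0 ≤ x i) → x ∈ Kd)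
    (hKn_closed : IsClosed Kn) (hKn_convex : Convex ℝ Kn)
    (hKn_cone : ∀ y ∈ Kn, ∀ t : ℝ, 0 ≤ t → t • y ∈ Kn)
    (hKn_orth : ∀ y : Fin n → ℝ, (∀ j, 0 ≤ y j) → y ∈ Kn)
    (v : Fin n → ℝ) (hv : ∀ j, 0 < v j)
    (l : Set (Fin n → ℝ)) (hl : l = {y | ∃ t : ℝ, 0 ≤ t ∧ y = t • v})
    (R : Lp (Fin d → ℝ) ⊤ P → Set (Fin n → ℝ))
    (hR_closed : ∀ Z, IsClosed (R Z))
    (hR_add : ∀ Z, R Z + Kn = R Z)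
    (hR_ray : ∀ Z, (R Z ∩ l).Nonempty)
    (ρ : Lp (Fin d → ℝ) ⊤ P → (Fin n → ℝ))
    (hρ : ∀ Z j, ρ Z j = sInf ((fun y => y j) '' (R Z ∩ l)))
    -- monotonicity of `R` in the set-valued sense
    (hmono : ∀ X Y : Lp (Fin d → ℝ) ⊤ P,
      (∀ᵐ ω ∂P, X ω - Y ω ∈ Kd) → R Y ⊆ R X + Kn) :
    ∀ X Y : Lp (Fin d → ℝ) ⊤ P,
      (∀ᵐ ω ∂P, X ω - Y ω ∈ Kd) →
      ρ Y - ρ X ∈ Kn ∧ ∀ j, ρ X j ≤ ρ Y j :=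
  setValuedRiskMeasure_scalarization_monotone_general P Kd Kn hKn_orth v hv l hl R hR_add hR_ray ρ
    hρ hmono
end

section
/- Let R be convex in the set-valued sense: for all X, Y in L^∞_d and all t ∈ [0,1], t·R(X) + (1−t)·R(Y) ⊆ R(tX + (1−t)Y) + K^n (Minkowski operations). Then the scalarization ρ_l is convex: for all X, Y in L^∞_d and all t ∈ [0,1], one has t·ρ_l(X) + (1−t)·ρ_l(Y) − ρ_l(tX + (1−t)Y) ∈ K^n. -/
open MeasureTheory Pointwise

/-! Along the ray through `v`, each `ρ_l(Z)` is `s_Z • v`, where `s_Z` is the infimum of the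
scalings `s ≥ 0` with `s • v ∈ R(Z)`. Set-valued convexity, together with `R(W) + K^n = R(W)`,
maps convex combinations of admissible scalings for `X` and `Y` to admissible scalings for
`W = tX + (1-t)Y`, so `s_W ≤ t s_X + (1-t) s_Y`. The difference in the conclusion is therefore
a nonnegative multiple of `v`, which lies in the nonnegative orthant and hence in `K^n`. -/

section RayScalings

variable {E : Type*} [AddCommGroup E] [Module ℝ E]

def rayScalings (A : Set E) (v : E) : Set ℝ := {s | 0 ≤ s ∧ s • v ∈ A}

lemma bddBelow_rayScalings (A : Set E) (v : E) : BddBelow (rayScalings A v) :=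
  ⟨0, fun _ hs => hs.1⟩

lemma rayScalings_nonempty_of_inter_ray {A : Set E} {v : E}
    (h : (A ∩ {y | ∃ t : ℝ, 0 ≤ t ∧ y = t • v}).Nonempty) : (rayScalings A v).Nonempty := by
  obtain ⟨_, hyA, s, hs, rfl⟩ := h
  exact ⟨s, hs, hyA⟩

lemma smul_rayScalings_add_smul_subset {A B C : Set E} {v : E} {a b : ℝ}
    (ha : 0 ≤ a) (hb : 0 ≤ b) (hABC : a • A + b • B ⊆ C) :
    a • rayScalings A v + b • rayScalings B v ⊆ rayScalings C v := by
  rintro _ ⟨_, ⟨s, ⟨hs, hsA⟩, rfl⟩, _, ⟨r, ⟨hr, hrB⟩, rfl⟩, rfl⟩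
  refine ⟨by positivity, hABC ?_⟩
  simp only [smul_eq_mul, add_smul, mul_smul]
  exact Set.add_mem_add (Set.smul_mem_smul_set hsA) (Set.smul_mem_smul_set hrB)

lemma sInf_rayScalings_le {A B C : Set E} {v : E} {a b : ℝ}
    (ha : 0 ≤ a) (hb : 0 ≤ b) (hA : (rayScalings A v).Nonempty)
    (hB : (rayScalings B v).Nonempty) (hABC : a • A + b • B ⊆ C) :
    sInf (rayScalings C v) ≤ a * sInf (rayScalings A v) + b * sInf (rayScalings B v) := by
  rw [← smul_eq_mul, ← smul_eq_mul, ← Real.sInf_smul_of_nonneg ha,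
    ← Real.sInf_smul_of_nonneg hb,
    ← csInf_add hA.smul_set ((bddBelow_rayScalings A v).smul_of_nonneg ha)
      hB.smul_set ((bddBelow_rayScalings B v).smul_of_nonneg hb)]
  exact csInf_le_csInf (bddBelow_rayScalings C v) (hA.smul_set.add hB.smul_set)
    (smul_rayScalings_add_smul_subset ha hb hABC)

end RayScalings

lemma sInf_eval_inter_ray {ι : Type*} {A : Set (ι → ℝ)} {v : ι → ℝ}
    (hA : (rayScalings A v).Nonempty) {j : ι} (hvj : 0 ≤ v j) :
    sInf ((fun y => y j) '' (A ∩ {y | ∃ t : ℝ, 0 ≤ t ∧ y = t • v})) =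
      (sInf (rayScalings A v) • v) j := by
  have himage : (fun y => y j) '' (A ∩ {y | ∃ t : ℝ, 0 ≤ t ∧ y = t • v}) =
      (fun s => s * v j) '' rayScalings A v := by
    ext
    constructor
    · rintro ⟨_, ⟨hyA, s, hs, rfl⟩, rfl⟩
      exact ⟨s, ⟨hs, hyA⟩, rfl⟩
    · rintro ⟨s, ⟨hs, hsA⟩, rfl⟩
      exact ⟨s • v, ⟨hsA, s, hs, rfl⟩, rfl⟩
  rw [himage, ← Monotone.map_csInf_of_continuousAt (continuous_mul_const (v j)).continuousAt
    (fun _ _ h => mul_le_mul_of_nonneg_right h hvj) hA (bddBelow_rayScalings A v)]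
  rfl

theorem setValuedRiskMeasure_scalarization_convex_general
    {Ω : Type*} [MeasurableSpace Ω] (P : Measure Ω)
    {d n : ℕ}
    (Kn : Set (Fin n → ℝ))
    (hKn_orth : ∀ y : Fin n → ℝ, (∀ j, 0 ≤ y j) → y ∈ Kn)
    (v : Fin n → ℝ) (hv : ∀ j, 0 < v j)
    (l : Set (Fin n → ℝ)) (hl : l = {y | ∃ t : ℝ, 0 ≤ t ∧ y = t • v})
    (R : Lp (Fin d → ℝ) ⊤ P → Set (Fin n → ℝ))
    (hR_add : ∀ Z, R Z + Kn = R Z)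
    (hR_ray : ∀ Z, (R Z ∩ l).Nonempty)
    (ρ : Lp (Fin d → ℝ) ⊤ P → (Fin n → ℝ))
    (hρ : ∀ Z j, ρ Z j = sInf ((fun y => y j) '' (R Z ∩ l)))
    -- convexity of `R` in the set-valued sense
    (hconv : ∀ X Y : Lp (Fin d → ℝ) ⊤ P, ∀ t ∈ Set.Icc (0:ℝ) 1,
      t • R X + (1 - t) • R Y ⊆ R (t • X + (1 - t) • Y) + Kn) :
    ∀ X Y : Lp (Fin d → ℝ) ⊤ P, ∀ t ∈ Set.Icc (0:ℝ) 1,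
      t • ρ X + (1 - t) • ρ Y - ρ (t • X + (1 - t) • Y) ∈ Kn := by
  subst hl
  have hS : ∀ Z, (rayScalings (R Z) v).Nonempty := fun Z =>
    rayScalings_nonempty_of_inter_ray (hR_ray Z)
  have hρ_ray : ∀ Z, ρ Z = sInf (rayScalings (R Z) v) • v := fun Z =>
    funext fun j => (hρ Z j).trans (sInf_eval_inter_ray (hS Z) (hv j).le)
  intro X Y t ht
  have hle := sInf_rayScalings_le ht.1 (sub_nonneg.2 ht.2) (hS X) (hS Y)
    ((hconv X Y t ht).trans (hR_add _).subset)
  rw [hρ_ray, hρ_ray, hρ_ray, smul_smul, smul_smul, ← add_smul, ← sub_smul]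
  exact hKn_orth _ fun j => mul_nonneg (sub_nonneg.2 hle) (hv j).le

/-- If the set-valued risk measure `R` is convex (in the set-valued
sense), then its scalarization `ρ_l` along the ray `l` through a strictly positive
vector `v` is convex: `t • ρ_l X + (1-t) • ρ_l Y - ρ_l (t • X + (1-t) • Y) ∈ K^n`. -/
theorem setValuedRiskMeasure_scalarization_convex
    {Ω : Type*} [MeasurableSpace Ω] (P : Measure Ω) [IsProbabilityMeasure P]
    {d n : ℕ}
    (Kd : Set (Fin d → ℝ)) (Kn : Set (Fin n → ℝ))
    (hKd_closed : IsClosed Kd) (hKd_convex : Convex ℝ Kd)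
    (hKd_cone : ∀ x ∈ Kd, ∀ t : ℝ, 0 ≤ t → t • x ∈ Kd)
    (hKd_orth : ∀ x : Fin d → ℝ, (∀ i, 0 ≤ x i) → x ∈ Kd)
    (hKn_closed : IsClosed Kn) (hKn_convex : Convex ℝ Kn)
    (hKn_cone : ∀ y ∈ Kn, ∀ t : ℝ, 0 ≤ t → t • y ∈ Kn)
    (hKn_orth : ∀ y : Fin n → ℝ, (∀ j, 0 ≤ y j) → y ∈ Kn)
    (v : Fin n → ℝ) (hv : ∀ j, 0 < v j)
    (l : Set (Fin n → ℝ)) (hl : l = {y | ∃ t : ℝ, 0 ≤ t ∧ y = t • v})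
    (R : Lp (Fin d → ℝ) ⊤ P → Set (Fin n → ℝ))
    (hR_closed : ∀ Z, IsClosed (R Z))
    (hR_add : ∀ Z, R Z + Kn = R Z)
    (hR_ray : ∀ Z, (R Z ∩ l).Nonempty)
    (ρ : Lp (Fin d → ℝ) ⊤ P → (Fin n → ℝ))
    (hρ : ∀ Z j, ρ Z j = sInf ((fun y => y j) '' (R Z ∩ l)))
    -- convexity of `R` in the set-valued sense
    (hconv : ∀ X Y : Lp (Fin d → ℝ) ⊤ P, ∀ t ∈ Set.Icc (0:ℝ) 1,
      t • R X + (1 - t) • R Y ⊆ R (t • X + (1 - t) • Y) + Kn) :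
    ∀ X Y : Lp (Fin d → ℝ) ⊤ P, ∀ t ∈ Set.Icc (0:ℝ) 1,
      t • ρ X + (1 - t) • ρ Y - ρ (t • X + (1 - t) • Y) ∈ Kn :=
  setValuedRiskMeasure_scalarization_convex_general P Kn hKn_orth v hv l hl R hR_add hR_ray ρ hρ
    hconv
end

section
/- Let R be sublinear in the set-valued sense: for all X, Y in L^∞_d, R(X) + R(Y) ⊆ R(X + Y) + K^n (Minkowski sums). Then the scalarization ρ_l is sublinear: for all X, Y in L^∞_d, one has ρ_l(X) + ρ_l(Y) − ρ_l(X + Y) ∈ K^n. -/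
open MeasureTheory Pointwise

/-- If the set-valued risk measure `R` is sublinear (in the set-valued
sense), then its scalarization `ρ_l` along the ray `l` through a strictly positive
vector `v` is sublinear: `ρ_l X + ρ_l Y - ρ_l (X + Y) ∈ K^n`. -/
theorem setValuedRiskMeasure_scalarization_sublinear
    {Ω : Type*} [MeasurableSpace Ω] (P : Measure Ω) [IsProbabilityMeasure P]
    {d n : ℕ}
    (Kn : Set (Fin n → ℝ))
    (hKn_closed : IsClosed Kn) (hKn_convex : Convex ℝ Kn)
    (hKn_cone : ∀ y ∈ Kn, ∀ t : ℝ, 0 ≤ t → t • y ∈ Kn)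
    (hKn_orth : ∀ y : Fin n → ℝ, (∀ j, 0 ≤ y j) → y ∈ Kn)
    (v : Fin n → ℝ) (hv : ∀ j, 0 < v j)
    (l : Set (Fin n → ℝ)) (hl : l = {y | ∃ t : ℝ, 0 ≤ t ∧ y = t • v})
    (R : Lp (Fin d → ℝ) ⊤ P → Set (Fin n → ℝ))
    (hR_closed : ∀ Z, IsClosed (R Z))
    (hR_add : ∀ Z, R Z + Kn = R Z)
    (hR_ray : ∀ Z, (R Z ∩ l).Nonempty)
    (ρ : Lp (Fin d → ℝ) ⊤ P → (Fin n → ℝ))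
    (hρ : ∀ Z j, ρ Z j = sInf ((fun y => y j) '' (R Z ∩ l)))
    -- sublinearity of `R` in the set-valued sense
    (hsub : ∀ X Y : Lp (Fin d → ℝ) ⊤ P, R X + R Y ⊆ R (X + Y) + Kn) :
    ∀ X Y : Lp (Fin d → ℝ) ⊤ P, ρ X + ρ Y - ρ (X + Y) ∈ Kn := by
  intro X Y
  -- the set of scaling parameters
  set T : Lp (Fin d → ℝ) ⊤ P → Set ℝ := fun Z => {t : ℝ | 0 ≤ t ∧ t • v ∈ R Z} with hT
  have hTne : ∀ Z, (T Z).Nonempty := by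
    intro Z
    obtain ⟨y, hyR, hyl⟩ := hR_ray Z
    rw [hl] at hyl
    obtain ⟨t, ht0, rfl⟩ := hyl
    exact ⟨t, ht0, hyR⟩
  have hTbdd : ∀ Z, BddBelow (T Z) := fun Z => ⟨0, fun t ht => ht.1⟩
  -- the value of ρ
  have hρ' : ∀ Z j, ρ Z j = v j * sInf (T Z) := by
    intro Z j
    rw [hρ]
    have himg : (fun y => y j) '' (R Z ∩ l) = v j • T Z := by
      ext x
      constructor
      · rintro ⟨y, ⟨hyR, hyl⟩, rfl⟩
        rw [hl] at hyl
        obtain ⟨t, ht0, rfl⟩ := hyl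
        exact ⟨t, ⟨ht0, hyR⟩, by simp [smul_eq_mul, mul_comm]⟩
      · rintro ⟨t, ⟨ht0, htR⟩, rfl⟩
        exact ⟨t • v, ⟨htR, by rw [hl]; exact ⟨t, ht0, rfl⟩⟩, by simp [smul_eq_mul, mul_comm]⟩
    rw [himg, Real.sInf_smul_of_nonneg (hv j).le, smul_eq_mul]
  -- key inequality on infima
  have key : sInf (T (X + Y)) ≤ sInf (T X) + sInf (T Y) := by
    have hmem : ∀ s ∈ T X, ∀ t ∈ T Y, s + t ∈ T (X + Y) := by
      intro s hs t ht
      refine ⟨add_nonneg hs.1 ht.1, ?_⟩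
      have : s • v + t • v ∈ R X + R Y := Set.add_mem_add hs.2 ht.2
      have h2 := hsub X Y this
      rw [hR_add] at h2
      rwa [add_smul]
    have h1 : sInf (T (X + Y)) - sInf (T Y) ≤ sInf (T X) := by
      apply le_csInf (hTne X)
      intro s hs
      have : sInf (T (X + Y)) - s ≤ sInf (T Y) := by
        apply le_csInf (hTne Y)
        intro t ht
        have := csInf_le (hTbdd (X + Y)) (hmem s hs t ht)
        linarith
      linarith
    linarith
  -- conclude
  apply hKn_orth
  intro j
  have hx := hρ' X j
  have hy := hρ' Y j
  have hxy := hρ' (X + Y) j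
  have : (ρ X + ρ Y - ρ (X + Y)) j = v j * (sInf (T X) + sInf (T Y) - sInf (T (X + Y))) := by
    simp only [Pi.add_apply, Pi.sub_apply, hx, hy, hxy]; ring
  rw [this]
  exact mul_nonneg (hv j).le (by linarith)
end
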